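/- Let I ⊆ R = K[x,y,z] be the homogeneous ideal of 3 distinct points of P²_K lying on an irreducible conic, and let m be even. Then the least degree of a nonzero homogeneous element of I^{(m)} is 3m/2; that is, I^{(m)} contains no nonzero form of degree less than 3m/2, and contains a nonzero form of degree 3m/2. -/

import Mathlib

open MvPolynomial Pointwise

/-- The polynomial ring `K[x,y,z]`, with `x = X 0`, `y = X 1`, `z = X 2`. -/
abbrev R3 (K : Type*) [Field K] := MvPolynomial (Fin 3) K

/-- The homogeneous vanishing ideal of the point of `ℙ²` with homogeneous
coordinates `p`: all polynomials vanishing on the whole line spanned by `p`. -/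
noncomputable def pointIdeal {K : Type*} [Field K] (p : Fin 3 → K) : Ideal (R3 K) :=
  ⨅ c : K, RingHom.ker (MvPolynomial.eval (c • p))

/-- The `m`-th symbolic power `I^(m) = I_{p_1}^m ∩ ⋯ ∩ I_{p_r}^m` of the ideal of the
points `p 0, …, p (r-1)`. -/
noncomputable def symbIdeal {K : Type*} [Field K] {r : ℕ} (p : Fin r → (Fin 3 → K)) (m : ℕ) :
    Ideal (R3 K) :=
  ⨅ i, (pointIdeal (p i)) ^ m

/-- The `p i` are nonzero and pairwise represent distinct points of `ℙ²`. -/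
def ProjDistinct {K : Type*} [Field K] {r : ℕ} (p : Fin r → (Fin 3 → K)) : Prop :=
  (∀ i, p i ≠ 0) ∧ ∀ i j, i ≠ j → ∀ c : K, p i ≠ c • p j

/-- The points `p i` lie on an irreducible conic. -/
def OnIrreducibleConic {K : Type*} [Field K] {r : ℕ} (p : Fin r → (Fin 3 → K)) : Prop :=
  ∃ q : R3 K, q.IsHomogeneous 2 ∧ Irreducible q ∧ ∀ i, MvPolynomial.eval (p i) q = 0

/-- Graded reverse lexicographic order with `x > y > z`:  `a < b` iff `deg a < deg b`, or the
degrees agree and the last nonzero entry of `a - b` is positive. -/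
def RevLexLT (a b : Fin 3 →₀ ℕ) : Prop :=
  (∑ j, a j) < (∑ j, b j) ∨
    ((∑ j, a j) = (∑ j, b j) ∧ ∃ k : Fin 3, b k < a k ∧ ∀ j, k < j → a j = b j)

/-- `a` is the exponent of the leading monomial of `f` for revlex. -/
def IsLeadMonomial {K : Type*} [Field K] (f : R3 K) (a : Fin 3 →₀ ℕ) : Prop :=
  a ∈ f.support ∧ ∀ b ∈ f.support, b ≠ a → RevLexLT b a

/-- The initial ideal of `J` with respect to the revlex order: the monomial ideal generated by
the leading monomials of the nonzero elements of `J`. -/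
noncomputable def initialIdeal {K : Type*} [Field K] (J : Ideal (R3 K)) : Ideal (R3 K) :=
  Ideal.span {g | ∃ f ∈ J, ∃ a, IsLeadMonomial f a ∧ g = MvPolynomial.monomial a (1 : K)}

/-- The linear change of coordinates on `K[x,y,z]` given by a `3 × 3` matrix. -/
noncomputable def changeCoords {K : Type*} [Field K] (g : Matrix (Fin 3) (Fin 3) K) :
    R3 K →ₐ[K] R3 K :=
  MvPolynomial.aeval (fun i => ∑ j, MvPolynomial.C (g i j) * MvPolynomial.X j)

/-- `G` is the generic initial ideal of `J` for the revlex order: on a nonempty Zariski-open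
subset of `GL₃(K)` (the nonvanishing locus, in `GL₃(K)`, of a nonzero polynomial in the matrix
entries), the initial ideal of `g • J` is constantly `G`. -/
def IsGin {K : Type*} [Field K] (J G : Ideal (R3 K)) : Prop :=
  ∃ h : MvPolynomial (Fin 3 × Fin 3) K, h ≠ 0 ∧
    ∀ g : Matrix (Fin 3) (Fin 3) K, IsUnit g.det →
      MvPolynomial.eval (fun q => g q.1 q.2) h ≠ 0 →
      initialIdeal (Ideal.map (changeCoords g) J) = G

/-- The Newton polytope of a monomial ideal whose generators involve only `x` and `y`,
regarded as a subset of `ℝ² = ℝ × ℝ`: the convex hull of the exponent vectors `(a, b)` of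
the monomials `x^a y^b` lying in the ideal. -/
noncomputable def newton2 {K : Type*} [Field K] (G : Ideal (R3 K)) : Set (ℝ × ℝ) :=
  convexHull ℝ {v | ∃ a b : ℕ,
    MvPolynomial.monomial (Finsupp.single (0 : Fin 3) a + Finsupp.single (1 : Fin 3) b)
      (1 : K) ∈ G ∧ v = ((a : ℝ), (b : ℝ))}

/-- The limiting shape of a system of monomial ideals: the closure of the union of the
scaled Newton polytopes `(1/m) • P_{gins m}`, `m ≥ 1`. -/
noncomputable def limitingShape {K : Type*} [Field K] (gins : ℕ → Ideal (R3 K)) :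
    Set (ℝ × ℝ) :=
  closure (⋃ m : ℕ, (((m + 1 : ℕ) : ℝ))⁻¹ • newton2 (gins (m + 1)))

/-- `S` is the set of minimal generators of the ideal `G`. -/
def IsMinGenSet {K : Type*} [Field K] (S : Set (R3 K)) (G : Ideal (R3 K)) : Prop :=
  G = Ideal.span S ∧ ∀ f ∈ S, f ∉ Ideal.span (S \ {f})

/-- A minimal graded free resolution `0 → ⊕_{j : κ} R(-u j) → ⊕_{i : ι} R(-d i) → I → 0` of an
ideal `I ⊆ K[x,y,z]`, recorded concretely:  `f i` are the images of the basis of `F₀` (homogeneous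
of degree `d i`, generating `I`), and `M` is the matrix of the (injective) graded map `F₁ → F₀`,
whose columns generate the syzygies of the `f i`; minimality means that the entries of `M` lie in
the irrelevant maximal ideal, i.e. have vanishing constant term. -/
structure MinFreeRes {K : Type*} [Field K] (I : Ideal (R3 K)) (ι κ : Type)
    [Fintype ι] [Fintype κ] (d : ι → ℕ) (u : κ → ℕ) where
  f : ι → R3 K
  hf_deg : ∀ i, (f i).IsHomogeneous (d i)
  hf_mem : ∀ i, f i ∈ I
  hf_span : I = Ideal.span (Set.range f)
  M : ι → κ → R3 K
  hM_deg : ∀ i j, M i j = 0 ∨ (d i ≤ u j ∧ (M i j).IsHomogeneous (u j - d i))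
  hM_complex : ∀ j, ∑ i, M i j * f i = 0
  hM_exact : ∀ v : ι → R3 K, ∑ i, v i * f i = 0 →
    ∃ w : κ → R3 K, ∀ i, v i = ∑ j, M i j * w j
  hM_inj : ∀ w : κ → R3 K, (∀ i, ∑ j, M i j * w j = 0) → w = 0
  h_min : ∀ i j, MvPolynomial.coeff 0 (M i j) = 0

/-!
Three distinct points on an irreducible conic are not collinear: otherwise, in coordinates in
which two of them are `[1:0:0]`, `[0:1:0]`, the conic restricts to a binary quadratic form on
the line `z = 0` with three zeros, so it vanishes there and `z` divides the conic. Hence a linear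
change of coordinates moves the points to the coordinate points, whose ideals are generated by
two of the variables. Every monomial `x^a y^b z^c` of a form in `I^(m)` then has
`b + c, a + c, a + b ≥ m`, so its degree is at least `3m/2`, and `(xyz)^(m/2)` attains the bound.
-/

namespace MvPolynomial

section WeightOrder

variable {σ R : Type*} [CommSemiring R] (w : σ → ℕ)

lemma le_weight_of_mem_support_mul {f g : MvPolynomial σ R} {s t : ℕ}
    (hf : ∀ d ∈ f.support, s ≤ Finsupp.weight w d)
    (hg : ∀ d ∈ g.support, t ≤ Finsupp.weight w d) :
    ∀ d ∈ (f * g).support, s + t ≤ Finsupp.weight w d := by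
  classical
  intro d hd
  obtain ⟨d₁, hd₁, d₂, hd₂, rfl⟩ := Finset.mem_add.mp (support_mul f g hd)
  rw [map_add]
  exact add_le_add (hf d₁ hd₁) (hg d₂ hd₂)

def weightOrderIdeal (t : ℕ) : Ideal (MvPolynomial σ R) where
  carrier := {f | ∀ d ∈ f.support, t ≤ Finsupp.weight w d}
  zero_mem' := by simp
  add_mem' {f g} hf hg d hd := by
    classical
    rcases Finset.mem_union.mp (support_add hd) with hd | hd
    exacts [hf d hd, hg d hd]
  smul_mem' c f hf := by
    simpa using le_weight_of_mem_support_mul w (s := 0) (g := f) (fun _ _ => Nat.zero_le _) hf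

variable {w}

lemma pow_le_weightOrderIdeal {P : Ideal (MvPolynomial σ R)} (hP : P ≤ weightOrderIdeal w 1) :
    ∀ m : ℕ, P ^ m ≤ weightOrderIdeal w m
  | 0 => fun _ _ _ _ => Nat.zero_le _
  | m + 1 => by
    rw [pow_succ]
    exact Ideal.mul_le.mpr fun f hf g hg =>
      le_weight_of_mem_support_mul w (pow_le_weightOrderIdeal hP m hf) (hP hg)

lemma span_X_image_le_weightOrderIdeal {s : Set σ} (hs : ∀ j ∈ s, w j ≠ 0) :
    Ideal.span (X '' s) ≤ weightOrderIdeal (R := R) w 1 := by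
  classical
  rw [Ideal.span_le]
  rintro _ ⟨j, hj, rfl⟩ d hd
  obtain rfl := Finset.mem_singleton.mp (support_monomial_subset hd)
  simpa [Finsupp.weight_single, Nat.one_le_iff_ne_zero] using hs j hj

end WeightOrder

lemma eval_aeval {σ τ R : Type*} [CommSemiring R] (x : τ → R) (g : σ → MvPolynomial τ R)
    (f : MvPolynomial σ R) : eval x (aeval g f) = eval (fun j => eval x (g j)) f :=
  eval₂Hom_bind₁ _ _ _ _

lemma sub_mem_of_forall_X_sub_mem {σ R : Type*} [CommRing R] {I : Ideal (MvPolynomial σ R)}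
    (φ : MvPolynomial σ R →ₐ[R] MvPolynomial σ R) (h : ∀ j, φ (X j) - X j ∈ I)
    (f : MvPolynomial σ R) : φ f - f ∈ I := by
  have hφ : (Ideal.Quotient.mkₐ R I).comp φ = Ideal.Quotient.mkₐ R I :=
    algHom_ext fun j => by simpa [Ideal.Quotient.eq] using h j
  simpa [Ideal.Quotient.eq] using AlgHom.congr_fun hφ f

lemma not_X_dvd_of_irreducible {σ R : Type*} [CommRing R] [IsDomain R] {Q : MvPolynomial σ R}
    {n : ℕ} (hQ : Q.IsHomogeneous n) (hn : n ≠ 1) (hirr : Irreducible Q) (i : σ) :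
    ¬ X i ∣ Q := by
  have hX : ¬ IsUnit (X i : MvPolynomial σ R) := fun hu => by
    obtain ⟨r, -, hr⟩ := isUnit_iff_eq_C_of_isReduced.mp hu
    exact one_ne_zero ((isHomogeneous_X R i).inj_right (hr ▸ isHomogeneous_C σ r) (X_ne_zero i))
  rintro ⟨g, rfl⟩
  obtain ⟨c, -, rfl⟩ :=
    isUnit_iff_eq_C_of_isReduced.mp ((hirr.isUnit_or_isUnit rfl).resolve_left hX)
  exact hn ((isHomogeneous_X R i).mul (isHomogeneous_C σ c) |>.inj_right hQ hirr.ne_zero).symm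

end MvPolynomial

section ChangeCoords

open Matrix

variable {K : Type*} [Field K]

lemma eval_changeCoords (A : Matrix (Fin 3) (Fin 3) K) (v : Fin 3 → K) (f : R3 K) :
    eval v (changeCoords A f) = eval (A *ᵥ v) f := by
  rw [changeCoords, eval_aeval]
  congr 2
  funext i
  simp [Matrix.mulVec, dotProduct]

lemma changeCoords_comp (A B : Matrix (Fin 3) (Fin 3) K) :
    (changeCoords A).comp (changeCoords B) = changeCoords (B * A) := by
  refine algHom_ext fun i => ?_
  simpa [changeCoords, Matrix.mul_apply, Finset.mul_sum, Finset.sum_mul, mul_assoc] using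
    Finset.sum_comm

lemma changeCoords_one : changeCoords (1 : Matrix (Fin 3) (Fin 3) K) = AlgHom.id K (R3 K) :=
  algHom_ext fun i => by simp [changeCoords, Matrix.one_apply]

noncomputable def changeCoordsEquiv (A : Matrix (Fin 3) (Fin 3) K) (hA : IsUnit A) :
    R3 K ≃ₐ[K] R3 K :=
  AlgEquiv.ofAlgHom (changeCoords A) (changeCoords A⁻¹)
    (by rw [changeCoords_comp, Matrix.nonsing_inv_mul _ ((Matrix.isUnit_iff_isUnit_det A).mp hA),
      changeCoords_one])
    (by rw [changeCoords_comp, Matrix.mul_nonsing_inv _ ((Matrix.isUnit_iff_isUnit_det A).mp hA),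
      changeCoords_one])

lemma MvPolynomial.IsHomogeneous.changeCoords {f : R3 K} {n : ℕ} (hf : f.IsHomogeneous n)
    (A : Matrix (Fin 3) (Fin 3) K) : (changeCoords A f).IsHomogeneous n := by
  simpa only [one_mul, _root_.changeCoords] using
    hf.aeval _ fun i => IsHomogeneous.sum _ _ _ fun j _ => isHomogeneous_C_mul_X (A i j) j

lemma mem_pointIdeal {q : Fin 3 → K} {f : R3 K} :
    f ∈ pointIdeal q ↔ ∀ c : K, eval (c • q) f = 0 := by
  simp [pointIdeal, RingHom.mem_ker]

lemma map_changeCoords_pointIdeal_le {A : Matrix (Fin 3) (Fin 3) K} {q v : Fin 3 → K}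
    (h : A *ᵥ v = q) : Ideal.map (changeCoords A) (pointIdeal q) ≤ pointIdeal v := by
  refine Ideal.map_le_iff_le_comap.mpr fun f hf => mem_pointIdeal.mpr fun c => ?_
  rw [eval_changeCoords, Matrix.mulVec_smul, h]
  exact mem_pointIdeal.mp hf c

lemma changeCoords_mem_symbIdeal {r : ℕ} {A : Matrix (Fin 3) (Fin 3) K}
    {p v : Fin r → Fin 3 → K} (h : ∀ i, A *ᵥ v i = p i) {m : ℕ} {f : R3 K}
    (hf : f ∈ symbIdeal p m) : changeCoords A f ∈ symbIdeal v m := by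
  simp only [symbIdeal, Ideal.mem_iInf] at hf ⊢
  intro i
  have hmap := Ideal.mem_map_of_mem (changeCoords A) (hf i)
  rw [Ideal.map_pow] at hmap
  exact Ideal.pow_right_mono (map_changeCoords_pointIdeal_le (h i)) m hmap

end ChangeCoords

section CoordinatePoints

variable {K : Type*} [Field K]

lemma X_mem_pointIdeal_single {i j : Fin 3} (h : j ≠ i) :
    (X j : R3 K) ∈ pointIdeal (Pi.single i 1) :=
  mem_pointIdeal.mpr fun c => by simp [h]

lemma pointIdeal_single_le_span_X [Infinite K] (i : Fin 3) :
    pointIdeal (Pi.single i (1 : K)) ≤ Ideal.span (X '' {i}ᶜ) := by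
  intro f hf
  let φ : R3 K →ₐ[K] R3 K := aeval (Pi.single i (X i))
  have hφf : φ f = 0 := MvPolynomial.funext fun x => by
    have hx : eval x (φ f) = eval (x i • Pi.single i 1) f := by
      rw [eval_aeval]
      congr 2
      funext j
      by_cases hj : j = i <;> simp [hj]
    simpa [hx] using mem_pointIdeal.mp hf (x i)
  have hX : ∀ j, φ (X j) - X j ∈ Ideal.span (X '' {i}ᶜ) := by
    intro j
    by_cases hj : j = i
    · simp [φ, hj]
    · simpa [φ, hj] using
        Ideal.subset_span (Set.mem_image_of_mem X (Set.mem_compl_singleton_iff.mpr hj))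
  simpa [hφf] using sub_mem_of_forall_X_sub_mem φ hX f

lemma three_mul_le_two_mul_of_mem_symbIdeal_single [Infinite K] {m k : ℕ} {f : R3 K}
    (hf : f ∈ symbIdeal (fun i => Pi.single i 1) m) (hf0 : f ≠ 0) (hfk : f.IsHomogeneous k) :
    3 * m ≤ 2 * k := by
  obtain ⟨d, hd⟩ := support_nonempty.mpr hf0
  have hweight (i : Fin 3) : m ≤ ∑ j, d j * if j = i then 0 else 1 := by
    have hle : pointIdeal (Pi.single i (1 : K)) ≤
        weightOrderIdeal (fun j => if j = i then 0 else 1) 1 :=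
      (pointIdeal_single_le_span_X i).trans
        (span_X_image_le_weightOrderIdeal fun j hj => by simpa using hj)
    simpa [Finsupp.weight_eq_sum] using
      pow_le_weightOrderIdeal hle m (Ideal.mem_iInf.mp hf i) d hd
  have hdeg : d 0 + d 1 + d 2 = k := by
    simpa [Finsupp.weight_eq_sum, Fin.sum_univ_three] using hfk (mem_support_iff.mp hd)
  have h0 : m ≤ d 1 + d 2 := by simpa [Fin.sum_univ_three] using hweight 0
  have h1 : m ≤ d 0 + d 2 := by simpa [Fin.sum_univ_three] using hweight 1
  have h2 : m ≤ d 0 + d 1 := by simpa [Fin.sum_univ_three] using hweight 2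
  omega

lemma prod_X_mem_pointIdeal_single_sq (i : Fin 3) :
    (X 0 * X 1 * X 2 : R3 K) ∈ pointIdeal (Pi.single i 1) ^ 2 := by
  have hX (j : Fin 3) (h : j ≠ i) := X_mem_pointIdeal_single (K := K) h
  rw [sq]
  fin_cases i
  · rw [mul_assoc]
    exact Ideal.mul_mem_left _ _ (Ideal.mul_mem_mul (hX 1 (by decide)) (hX 2 (by decide)))
  · rw [mul_right_comm]
    exact Ideal.mul_mem_right _ _ (Ideal.mul_mem_mul (hX 0 (by decide)) (hX 2 (by decide)))
  · exact Ideal.mul_mem_right _ _ (Ideal.mul_mem_mul (hX 0 (by decide)) (hX 1 (by decide)))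

lemma prod_X_pow_mem_symbIdeal_single (t : ℕ) :
    (X 0 * X 1 * X 2 : R3 K) ^ t ∈ symbIdeal (fun i => Pi.single i 1) (2 * t) :=
  Ideal.mem_iInf.mpr fun i => by
    rw [pow_mul]
    exact Ideal.pow_mem_pow (prod_X_mem_pointIdeal_single_sq i) t

end CoordinatePoints

section Conic

open Matrix

variable {K : Type*} [Field K]

lemma ProjDistinct.linearIndependent_pair {p : Fin 3 → Fin 3 → K} (hdist : ProjDistinct p) :
    LinearIndependent K ![p 0, p 1] :=
  linearIndependent_fin2.mpr ⟨hdist.1 1, fun c => (hdist.2 0 1 (by decide) c).symm⟩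

lemma exists_det_ne_zero_of_linearIndependent {v w : Fin 3 → K}
    (h : LinearIndependent K ![v, w]) : ∃ u, (Matrix.of ![v, w, u]).det ≠ 0 := by
  obtain ⟨k, hk⟩ := Function.ne_iff.mp (crossProduct_ne_zero_iff_linearIndependent.mpr h)
  refine ⟨Pi.single k 1, ?_⟩
  change Matrix.det ![v, w, Pi.single k 1] ≠ 0
  rw [← triple_product_eq_det, ← triple_product_permutation, single_dotProduct, one_mul]
  exact hk

lemma eq_of_degree_two_of_apply_two_eq_zero {d : Fin 3 →₀ ℕ} (hd : d 0 + d 1 + d 2 = 2)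
    (h2 : d 2 = 0) :
    d = Finsupp.single 0 2 ∨ d = Finsupp.single 0 1 + Finsupp.single 1 1 ∨
      d = Finsupp.single 1 2 := by
  have : d 0 = 2 ∧ d 1 = 0 ∨ d 0 = 1 ∧ d 1 = 1 ∨ d 0 = 0 ∧ d 1 = 2 := by omega
  rcases this with ⟨h0, h1⟩ | ⟨h0, h1⟩ | ⟨h0, h1⟩
  · exact Or.inl (Finsupp.ext fun j => by fin_cases j <;> simp [h0, h1, h2])
  · exact Or.inr (Or.inl (Finsupp.ext fun j => by fin_cases j <;> simp [h0, h1, h2]))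
  · exact Or.inr (Or.inr (Finsupp.ext fun j => by fin_cases j <;> simp [h0, h1, h2]))

lemma eval_vecCons_zero_of_isHomogeneous_two {Q : R3 K} (hQ : Q.IsHomogeneous 2) (s t : K) :
    eval ![s, t, 0] Q = coeff (Finsupp.single 0 2) Q * s ^ 2 +
      coeff (Finsupp.single 0 1 + Finsupp.single 1 1) Q * (s * t) +
      coeff (Finsupp.single 1 2) Q * t ^ 2 := by
  classical
  set T : Finset (Fin 3 →₀ ℕ) :=
    {Finsupp.single 0 2, Finsupp.single 0 1 + Finsupp.single 1 1, Finsupp.single 1 2}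
  rw [eval_eq', Finset.sum_congr_of_eq_on_inter (s₂ := T) ?_ ?_ fun _ _ _ => rfl]
  · rw [Finset.sum_insert (by simp [Finsupp.ext_iff, Fin.forall_fin_succ]),
      Finset.sum_insert (by simp [Finsupp.ext_iff, Fin.forall_fin_succ]), Finset.sum_singleton]
    simp [Fin.prod_univ_three, add_assoc]
  · intro d hd hdT
    have h2 : d 2 ≠ 0 := fun h2 => hdT <| by
      have hdeg : d 0 + d 1 + d 2 = 2 := by
        simpa [Finsupp.weight_eq_sum, Fin.sum_univ_three] using hQ (mem_support_iff.mp hd)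
      rcases eq_of_degree_two_of_apply_two_eq_zero hdeg h2 with h | h | h <;> simp [T, h]
    simp [Fin.prod_univ_three, h2]
  · intro d _ hd
    rw [notMem_support_iff.mp hd, zero_mul]

lemma X_two_dvd_of_eval_eq_zero {Q : R3 K} (hQ : Q.IsHomogeneous 2) {a b : K} (ha : a ≠ 0)
    (hb : b ≠ 0) (h₁ : eval ![1, 0, 0] Q = 0) (h₂ : eval ![0, 1, 0] Q = 0)
    (h₃ : eval ![a, b, 0] Q = 0) : X 2 ∣ Q := by
  rw [eval_vecCons_zero_of_isHomogeneous_two hQ] at h₁ h₂ h₃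
  simp only [one_pow, zero_pow two_ne_zero, mul_one, mul_zero, add_zero, zero_add] at h₁ h₂
  rw [h₁, h₂] at h₃
  have h₃' : coeff (Finsupp.single 0 1 + Finsupp.single 1 1) Q = 0 := by
    simpa [ha, hb] using h₃
  have hsupp : ∀ d ∈ Q.support, ∃ i ∈ ({2} : Set (Fin 3)), d i ≠ 0 := by
    intro d hd
    refine ⟨2, rfl, fun h2 => mem_support_iff.mp hd ?_⟩
    have hdeg : d 0 + d 1 + d 2 = 2 := by
      simpa [Finsupp.weight_eq_sum, Fin.sum_univ_three] using hQ (mem_support_iff.mp hd)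
    rcases eq_of_degree_two_of_apply_two_eq_zero hdeg h2 with rfl | rfl | rfl
    exacts [h₁, h₃', h₂]
  simpa [Ideal.mem_span_singleton] using mem_ideal_span_X_image.mpr hsupp

lemma smul_add_smul_ne_of_onIrreducibleConic {p : Fin 3 → Fin 3 → K} (hdist : ProjDistinct p)
    (hconic : OnIrreducibleConic p) (a b : K) : a • p 0 + b • p 1 ≠ p 2 := by
  intro hab
  have ha : a ≠ 0 := by
    rintro rfl
    exact hdist.2 2 1 (by decide) b (by simp [← hab])
  have hb : b ≠ 0 := by
    rintro rfl
    exact hdist.2 2 0 (by decide) a (by simp [← hab])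
  obtain ⟨u, hu⟩ := exists_det_ne_zero_of_linearIndependent hdist.linearIndependent_pair
  set M := Matrix.of ![p 0, p 1, u]
  have hMT : IsUnit Mᵀ :=
    (Matrix.isUnit_transpose M).mpr ((Matrix.isUnit_iff_isUnit_det M).mpr hu.isUnit)
  obtain ⟨q, hq, hirr, hqp⟩ := hconic
  -- In the coordinates given by the basis `p 0, p 1, u`, the conic vanishes at three points of
  -- the line `z = 0`.
  have hQ (s t : K) : eval ![s, t, 0] (changeCoords Mᵀ q) = eval (s • p 0 + t • p 1) q := by
    rw [eval_changeCoords, Matrix.mulVec_transpose]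
    congr 2
    funext j
    simp [M, Matrix.vecMul, dotProduct, Fin.sum_univ_three]
  refine not_X_dvd_of_irreducible (hq.changeCoords Mᵀ) (by decide)
    ((MulEquiv.irreducible_iff (changeCoordsEquiv Mᵀ hMT)).mpr hirr) 2
    (X_two_dvd_of_eval_eq_zero (hq.changeCoords Mᵀ) ha hb ?_ ?_ ?_)
  · simpa [hQ] using hqp 0
  · simpa [hQ] using hqp 1
  · simpa [hQ, hab] using hqp 2

lemma linearIndependent_of_onIrreducibleConic {p : Fin 3 → Fin 3 → K} (hdist : ProjDistinct p)
    (hconic : OnIrreducibleConic p) : LinearIndependent K p := by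
  rw [← Fin.snoc_init_self p, linearIndependent_finSnoc]
  have hinit : Fin.init p = ![p 0, p 1] := by
    funext i
    fin_cases i <;> rfl
  refine ⟨?_, ?_⟩
  · exact hinit ▸ hdist.linearIndependent_pair
  · rw [hinit, Matrix.range_cons_cons_empty, Submodule.mem_span_pair]
    rintro ⟨a, b, hab⟩
    exact smul_add_smul_ne_of_onIrreducibleConic hdist hconic a b hab

lemma exists_isUnit_mulVec_single_eq_of_onIrreducibleConic {p : Fin 3 → Fin 3 → K}
    (hdist : ProjDistinct p) (hconic : OnIrreducibleConic p) :
    ∃ A : Matrix (Fin 3) (Fin 3) K, IsUnit A ∧ ∀ i, A *ᵥ Pi.single i 1 = p i :=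
  ⟨(Matrix.of p)ᵀ, (isUnit_transpose _).mpr
    (linearIndependent_rows_iff_isUnit.mp (linearIndependent_of_onIrreducibleConic hdist hconic)),
    fun i => by simp⟩

end Conic

theorem symbolic_power_initial_degree_three_points_general {K : Type*} [Field K] [IsAlgClosed K]
    (p : Fin 3 → (Fin 3 → K))
    (hdist : ProjDistinct p) (hconic : OnIrreducibleConic p)
    (m : ℕ) (hme : Even m) :
    (∃ f ∈ symbIdeal p m, f ≠ 0 ∧ MvPolynomial.IsHomogeneous f (3 * m / 2)) ∧
    (∀ f ∈ symbIdeal p m, f ≠ 0 → ∀ k : ℕ, MvPolynomial.IsHomogeneous f k → 3 * m / 2 ≤ k) := by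
  obtain ⟨t, rfl⟩ := hme
  obtain ⟨A, hA, hAp⟩ := exists_isUnit_mulVec_single_eq_of_onIrreducibleConic hdist hconic
  have hAp_inv (i : Fin 3) : A⁻¹.mulVec (p i) = Pi.single i 1 :=
    have := hA.invertible
    Matrix.inv_mulVec_eq_vec (hAp i).symm
  set e := changeCoordsEquiv A hA
  set g : R3 K := (X 0 * X 1 * X 2) ^ t
  have hg : g.IsHomogeneous (3 * t) := by
    simpa [mul_comm] using (((isHomogeneous_X K (0 : Fin 3)).mul (isHomogeneous_X K 1)).mul
      (isHomogeneous_X K 2)).pow t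
  have hg0 : g ≠ 0 := pow_ne_zero _ (by simp [X_ne_zero])
  rw [show 3 * (t + t) / 2 = 3 * t by omega]
  refine ⟨⟨e.symm g, ?_, (map_ne_zero_iff _ e.symm.injective).mpr hg0, hg.changeCoords _⟩,
    fun f hf hf0 k hfk => ?_⟩
  · exact changeCoords_mem_symbIdeal hAp_inv (two_mul t ▸ prod_X_pow_mem_symbIdeal_single t)
  · have := three_mul_le_two_mul_of_mem_symbIdeal_single (changeCoords_mem_symbIdeal hAp hf)
      ((map_ne_zero_iff e e.injective).mpr hf0) (hfk.changeCoords _)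
    omega

/-- For the ideal `I` of `3` points on an irreducible conic and `m` even, the least degree of
a nonzero homogeneous element of `I^(m)` is `3m/2`. -/
theorem symbolic_power_initial_degree_three_points {K : Type*} [Field K] [IsAlgClosed K]
    (p : Fin 3 → (Fin 3 → K))
    (hdist : ProjDistinct p) (hconic : OnIrreducibleConic p)
    (m : ℕ) (hm : 1 ≤ m) (hme : Even m) :
    (∃ f ∈ symbIdeal p m, f ≠ 0 ∧ MvPolynomial.IsHomogeneous f (3 * m / 2)) ∧
    (∀ f ∈ symbIdeal p m, f ≠ 0 → ∀ k : ℕ, MvPolynomial.IsHomogeneous f k → 3 * m / 2 ≤ k) :=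
  symbolic_power_initial_degree_three_points_general p hdist hconic m hme
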